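/- arXiv:1108.2083 — 2 statements merged into one kernel-verified Lean document; each statement's English description precedes it below -/
import Mathlib

section
/- Let M be an R-module that is PSD for an ideal I of R. Then any direct summand of M is PSD for I. -/
open Submodule Function LinearMap

universe u v w x y

universe u_1 u_2

section Defs

variable (R : Type u) [Ring R]

/-- `I` (a left ideal) is a two-sided ideal. -/
def IsTwoSidedI (I : Ideal R) : Prop := ∀ a b : R, a ∈ I → a * b ∈ I

variable {M : Type v} [AddCommGroup M] [Module R M]

/-- `N` is PSD in the submodule `T` of `M` (taking `T = ⊤` gives "PSD in `M`"):
whenever `N + X = T`, there is a projective direct summand `S` of `T` with `S ≤ N`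
and `T = S ⊕ X`. -/
def PSDIn (T N : Submodule R M) : Prop :=
  ∀ X : Submodule R M, X ≤ T → N ⊔ X = T →
    ∃ S : Submodule R M, Module.Projective R S ∧ S ≤ N ∧ S ⊔ X = T ∧ S ⊓ X = ⊥

/-- `M` is PSD for the ideal `I`: every submodule of `IM` is PSD in `M`. -/
def PSDFor (I : Ideal R) (M : Type v) [AddCommGroup M] [Module R M] : Prop :=
  ∀ N : Submodule R M, N ≤ I • (⊤ : Submodule R M) → PSDIn R ⊤ N

/-- `R` is a left PSD ring for `I`: every finitely generated free left `R`-module is PSD for `I`. -/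
def PSDRing (I : Ideal R) : Prop :=
  ∀ (F : Type u) [AddCommGroup F] [Module R F] [Module.Free R F] [Module.Finite R F],
    PSDFor R I F

/-- `f : P → M` is a projective `I`-cover. -/
def IsProjICover (I : Ideal R) {P : Type w} [AddCommGroup P] [Module R P]
    (f : P →ₗ[R] M) : Prop :=
  Surjective f ∧ Module.Projective R P ∧
    LinearMap.ker f ≤ I • (⊤ : Submodule R P) ∧ PSDIn R ⊤ (LinearMap.ker f)

/-- A projective `I`-cover of `M`. -/
structure ProjICover (I : Ideal R) (M : Type v) [AddCommGroup M] [Module R M] where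
  P : Type w
  [addP : AddCommGroup P]
  [modP : Module R P]
  f : P →ₗ[R] M
  cover : IsProjICover R I f

/-- `R` is `I`-semiregular. -/
def ISemiregular (I : Ideal R) : Prop :=
  ∀ a : R, ∃ P Q : Submodule R R, IsCompl P Q ∧ Module.Projective R P ∧
    P ≤ Submodule.span R {a} ∧ Submodule.span R {a} ⊓ Q ≤ I

/-- `R` is `I`-semiperfect. -/
def ISemiperfect (I : Ideal R) : Prop :=
  ∀ K : Submodule R R, ∃ A B : Submodule R R, IsCompl A B ∧ Module.Projective R A ∧
    A ≤ K ∧ K ⊓ B ≤ I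

end Defs




section Defs2

variable (R : Type u) [Ring R]
variable {M : Type v} [AddCommGroup M] [Module R M]

/-- A submodule `S` is small in the submodule `T` (take `T = ⊤` for "small in `M`"). -/
def SmallIn (T S : Submodule R M) : Prop :=
  ∀ X : Submodule R M, X ≤ T → S ⊔ X = T → X = T

/-- `K` is DM in the submodule `T` of `M`: whenever `K + X = T` there is a direct
summand `S` of `T` with `S ≤ K` and `S + X = T`. -/
def DMIn (T K : Submodule R M) : Prop :=
  ∀ X : Submodule R M, X ≤ T → K ⊔ X = T →
    ∃ S : Submodule R M, S ≤ K ∧ (∃ S' : Submodule R M, S ⊔ S' = T ∧ S ⊓ S' = ⊥) ∧ S ⊔ X = T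

/-- `M` is DM for `I`: every submodule of `IM` is DM in `M`. -/
def DMFor (I : Ideal R) (M : Type v) [AddCommGroup M] [Module R M] : Prop :=
  ∀ K : Submodule R M, K ≤ I • (⊤ : Submodule R M) → DMIn R ⊤ K

/-- `R` is a left DM ring for `I`. -/
def DMRing (I : Ideal R) : Prop :=
  ∀ (F : Type u) [AddCommGroup F] [Module R F] [Module.Free R F] [Module.Finite R F],
    DMFor R I F

/-- `M` is an `I`-supplemented module. -/
def ISupplemented (I : Ideal R) (M : Type v) [AddCommGroup M] [Module R M] : Prop :=
  ∀ X : Submodule R M, ∃ Y : Submodule R M, Module.Projective R Y ∧ X ⊔ Y = ⊤ ∧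
    X ⊓ Y ≤ I • Y ∧ DMIn R Y (X ⊓ Y)

/-- `M` is a finitely `I`-supplemented module. -/
def FinISupplemented (I : Ideal R) (M : Type v) [AddCommGroup M] [Module R M] : Prop :=
  ∀ X : Submodule R M, X.FG → ∃ Y : Submodule R M, Module.Projective R Y ∧ X ⊔ Y = ⊤ ∧
    X ⊓ Y ≤ I • Y ∧ DMIn R Y (X ⊓ Y)

/-- `M` is a supplemented module. -/
def Supplemented (M : Type v) [AddCommGroup M] [Module R M] : Prop :=
  ∀ X : Submodule R M, ∃ Y : Submodule R M, X ⊔ Y = ⊤ ∧ SmallIn R Y (X ⊓ Y)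

/-- `M` is an `I`-semiperfect module. -/
def ISemiperfectMod (I : Ideal R) (M : Type v) [AddCommGroup M] [Module R M] : Prop :=
  ∀ K : Submodule R M, ∃ A B : Submodule R M, IsCompl A B ∧ Module.Projective R A ∧
    A ≤ K ∧ K ⊓ B ≤ I • (⊤ : Submodule R M)

/-- The radical of `M`: the intersection of all maximal submodules. -/
def RadM (M : Type v) [AddCommGroup M] [Module R M] : Submodule R M :=
  sInf {N : Submodule R M | IsCoatom N}

/-- The socle of `M`: the sum of all simple submodules. -/
def SocM (M : Type v) [AddCommGroup M] [Module R M] : Submodule R M :=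
  sSup {N : Submodule R M | IsSimpleModule R N}

/-- `P` is locally projective (lifting version). -/
def LocallyProjective (P : Type w) [AddCommGroup P] [Module R P] : Prop :=
  ∀ (A : Type x) (B : Type y) [AddCommGroup A] [Module R A] [AddCommGroup B] [Module R B]
    (g : A →ₗ[R] B) (f : P →ₗ[R] B), Surjective g →
      ∀ P₀ : Submodule R P, P₀.FG → ∃ h : P →ₗ[R] A, ∀ p ∈ P₀, f p = g (h p)

/-- `P` is locally projective (splitting version). -/
def LocallyProjectiveB (P : Type w) [AddCommGroup P] [Module R P] : Prop :=
  ∀ (N : Type x) [AddCommGroup N] [Module R N] (g : N →ₗ[R] P), Surjective g →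
    ∀ P₀ : Submodule R P, P₀.FG → ∃ h : P →ₗ[R] N, ∀ p ∈ P₀, g (h p) = p


/-- A locally projective `I`-cover of `M`. -/
structure LocProjICover (I : Ideal R) (M : Type v) [AddCommGroup M] [Module R M] where
  P : Type w
  [addP : AddCommGroup P]
  [modP : Module R P]
  f : P →ₗ[R] M
  surj : Surjective f
  locProj : LocallyProjective.{u, w, u_1, u_2} R P
  ker_le : LinearMap.ker f ≤ I • (⊤ : Submodule R P)
  psd : PSDIn R ⊤ (LinearMap.ker f)

/-- A locally projective cover of `M`. -/
structure LocProjCover (M : Type v) [AddCommGroup M] [Module R M] where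
  P : Type w
  [addP : AddCommGroup P]
  [modP : Module R P]
  f : P →ₗ[R] M
  surj : Surjective f
  locProj : LocallyProjective.{u, w, u_1, u_2} R P
  ker_small : SmallIn R ⊤ (LinearMap.ker f)

/-- A projective cover of `M`. -/
structure ProjCover (M : Type v) [AddCommGroup M] [Module R M] where
  P : Type w
  [addP : AddCommGroup P]
  [modP : Module R P]
  f : P →ₗ[R] M
  surj : Surjective f
  proj : Module.Projective R P
  ker_small : SmallIn R ⊤ (LinearMap.ker f)

/-- `M` is self-projective (quasi-projective). -/
def SelfProjective (M : Type v) [AddCommGroup M] [Module R M] : Prop :=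
  ∀ (K : Submodule R M) (f : M →ₗ[R] M ⧸ K), ∃ h : M →ₗ[R] M, K.mkQ ∘ₗ h = f

/-- A projectivity class of `R`-modules (in a fixed universe). -/
def ProjectivityClass
    (Pc : ∀ (N : Type w) [AddCommGroup N] [Module R N], Prop) : Prop :=
  (∀ (N : Type w) [AddCommGroup N] [Module R N], SelfProjective R N → Pc N) ∧
  (∀ (N P : Type w) [AddCommGroup N] [Module R N] [AddCommGroup P] [Module R P]
      (f : P →ₗ[R] N), Surjective f → Module.Projective R P → Pc (P × N) →
        Module.Projective R N)

/-- `Pc` is closed under direct summands. -/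
def ClosedUnderSummands
    (Pc : ∀ (N : Type w) [AddCommGroup N] [Module R N], Prop) : Prop :=
  ∀ (N P : Type w) [AddCommGroup N] [Module R N] [AddCommGroup P] [Module R P],
    Pc P → ∀ (i : N →ₗ[R] P) (p : P →ₗ[R] N), p ∘ₗ i = LinearMap.id → Pc N

/-- A `Pc`-projective `I`-cover of `M`. -/
structure PProjICover (Pc : ∀ (N : Type w) [AddCommGroup N] [Module R N], Prop)
    (I : Ideal R) (M : Type v) [AddCommGroup M] [Module R M] where
  Q : Type w
  [addQ : AddCommGroup Q]
  [modQ : Module R Q]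
  g : Q →ₗ[R] M
  surj : Surjective g
  memP : Pc Q
  ker_le : LinearMap.ker g ≤ I • (⊤ : Submodule R Q)
  psd : PSDIn R ⊤ (LinearMap.ker g)

end Defs2

/-!
If `M = N ⊕ N'` and `K + X = N` inside `N`, then `K + (X + N') = M`. PSD-ness of `K` in `M`
gives a projective `S ≤ K` with `M = S ⊕ (X + N')`, and the modular law cuts this down to
`N = S ⊕ X`.
-/

section PSDSummand

variable {R : Type u} [Ring R] {M : Type v} [AddCommGroup M] [Module R M]

theorem PSDIn.of_isCompl {K N N' : Submodule R M} (hK : PSDIn R ⊤ K) (hNN' : IsCompl N N')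
    (hKN : K ≤ N) : PSDIn R N K := by
  intro X hXN hKX
  have hsup : K ⊔ (X ⊔ N') = ⊤ := by rw [← sup_assoc, hKX, hNN'.sup_eq_top]
  obtain ⟨S, hSproj, hSK, hSXN', hSXN'_bot⟩ := hK (X ⊔ N') le_top hsup
  have hSXN : S ⊔ X ≤ N := sup_le (hSK.trans hKN) hXN
  refine ⟨S, hSproj, hSK, ?_, ?_⟩
  · calc S ⊔ X = S ⊔ X ⊔ N' ⊓ N := by rw [hNN'.symm.inf_eq_bot, sup_bot_eq]
      _ = (S ⊔ X ⊔ N') ⊓ N := (sup_inf_assoc_of_le N' hSXN).symm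
      _ = N := by rw [sup_assoc, hSXN', top_inf_eq]
  · exact eq_bot_iff.mpr (hSXN'_bot ▸ inf_le_inf_left S le_sup_left)

theorem PSDIn.of_map_subtype {N : Submodule R M} {K : Submodule R N}
    (hK : PSDIn R N (K.map N.subtype)) : PSDIn R ⊤ K := by
  have hinj := map_injective_of_injective N.injective_subtype
  intro X _ hKX
  have hsup : K.map N.subtype ⊔ X.map N.subtype = N := by
    rw [← Submodule.map_sup, hKX, Submodule.map_top, range_subtype]
  obtain ⟨S, hSproj, hSK, hSX, hSX_bot⟩ := hK (X.map N.subtype) (map_subtype_le N X) hsup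
  have hSN : S ≤ N := hSK.trans (map_subtype_le N K)
  have hS : (S.comap N.subtype).map N.subtype = S := by
    rw [map_comap_subtype, inf_of_le_right hSN]
  refine ⟨S.comap N.subtype, .of_equiv (comapSubtypeEquivOfLe hSN).symm, ?_, ?_, ?_⟩
  · rw [← hS] at hSK
    exact (map_le_map_iff_of_injective N.injective_subtype _ _).mp hSK
  · apply hinj
    rw [Submodule.map_sup, hS, hSX, Submodule.map_top, range_subtype]
  · apply hinj
    rw [map_inf _ N.injective_subtype, hS, hSX_bot, Submodule.map_bot]

end PSDSummand

theorem stmt1_general {R : Type u} [Ring R] {M : Type v} [AddCommGroup M] [Module R M]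
    (I : Ideal R) (hM : PSDFor R I M)
    (N : Submodule R M) (hN : ∃ N' : Submodule R M, IsCompl N N') :
    PSDFor R I N := by
  intro K hK
  obtain ⟨N', hNN'⟩ := hN
  have hKI : K.map N.subtype ≤ I • ⊤ :=
    map_le_iff_le_comap.mpr (hK.trans (smul_top_le_comap_smul_top I N.subtype))
  exact ((hM _ hKI).of_isCompl hNN' (map_subtype_le N K)).of_map_subtype

theorem stmt1 {R : Type u} [Ring R] {M : Type v} [AddCommGroup M] [Module R M]
    (I : Ideal R) (hI : IsTwoSidedI R I) (hM : PSDFor R I M)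
    (N : Submodule R M) (hN : ∃ N' : Submodule R M, IsCompl N N') :
    PSDFor R I N :=
  stmt1_general I hM N hN
end

section
/- Let I be an ideal of R with I ⊆ Soc(_R R). Then any submodule of IM is PSD in M for every finitely generated free left R-module M; in particular, R is a left PSD ring for I. -/
open Submodule Function LinearMap

universe u v w x y
universe u_1 u_2

/-!
Since `I ⊆ Soc(R)`, every submodule `N` of `IF` lies in the socle of `F` and is therefore
semisimple. If `N + X = F`, a complement `S` of `N ∩ X` inside `N` is a complement of `X` in `F`,
so `S` is a direct summand of the free module `F` and hence projective.
-/

theorem isCompl_of_inf_sup_eq {α : Type*} [Lattice α] [BoundedOrder α] {S N X : α}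
    (hSN : S ≤ N) (hinf : N ⊓ X ⊓ S = ⊥) (hsup : N ⊓ X ⊔ S = N) (hNX : N ⊔ X = ⊤) :
    IsCompl S X := by
  refine ⟨disjoint_iff.mpr (eq_bot_iff.mpr ?_), codisjoint_iff.mpr (eq_top_iff.mpr ?_)⟩
  · rw [← hinf]
    exact le_inf (le_inf (inf_le_left.trans hSN) inf_le_right) inf_le_left
  · rw [← hNX, ← hsup]
    exact sup_le (sup_le (inf_le_right.trans le_sup_right) le_sup_left) le_sup_right

section Module

variable {R : Type u} [Ring R] {M : Type v} [AddCommGroup M] [Module R M]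

instance isSemisimpleModule_socM : IsSemisimpleModule R (SocM R M) := by
  rw [SocM, sSup_eq_iSup]
  exact isSemisimpleModule_biSup_of_isSemisimpleModule_submodule
    fun m (_ : IsSimpleModule R m) ↦ inferInstance

theorem le_socM_of_isSemisimpleModule (T : Submodule R M) [IsSemisimpleModule R T] :
    T ≤ SocM R M := by
  rw [← T.range_subtype, LinearMap.range_eq_map, ← IsSemisimpleModule.sSup_simples_eq_top R T,
    sSup_eq_iSup', Submodule.map_iSup]
  refine iSup_le fun m ↦ le_sSup ?_
  have : IsSimpleModule R m := m.2
  exact .congr (m.1.equivMapOfInjective T.subtype T.injective_subtype).symm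

theorem isSemisimpleModule_of_le_socM {N : Submodule R M} (h : N ≤ SocM R M) :
    IsSemisimpleModule R N :=
  .of_injective _ (Submodule.inclusion_injective h)

theorem map_socM_le {N : Type w} [AddCommGroup N] [Module R N] (f : M →ₗ[R] N) :
    (SocM R M).map f ≤ SocM R N := by
  have : IsSemisimpleModule R ((SocM R M).map f) := by
    rw [← Submodule.range_subtype (SocM R M), ← LinearMap.range_comp]
    exact .range _
  exact le_socM_of_isSemisimpleModule _

theorem smul_top_le_socM {I : Ideal R} (hI : (I : Submodule R R) ≤ SocM R R) :
    I • (⊤ : Submodule R M) ≤ SocM R M :=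
  Submodule.smul_le.mpr fun a ha m _ ↦
    map_socM_le (LinearMap.toSpanSingleton R M m) ⟨a, hI ha, rfl⟩

theorem Submodule.exists_le_inf_eq_bot_sup_eq {N : Submodule R M} [IsSemisimpleModule R N]
    {K : Submodule R M} (hK : K ≤ N) : ∃ S ≤ N, K ⊓ S = ⊥ ∧ K ⊔ S = N :=
  Set.Iic.complementedLattice_iff.mp (N.mapIic.complementedLattice_iff.mp inferInstance) K hK

theorem Module.Projective.of_isCompl [Module.Projective R M] {S X : Submodule R M}
    (h : IsCompl S X) : Module.Projective R S :=
  .of_split S.subtype (S.projectionOnto X h) (Submodule.projectionOnto_comp_subtype h)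

theorem psdIn_top_of_isSemisimpleModule [Module.Projective R M] (N : Submodule R M)
    [IsSemisimpleModule R N] : PSDIn R ⊤ N := by
  intro X _ hNX
  obtain ⟨S, hSN, hinf, hsup⟩ := Submodule.exists_le_inf_eq_bot_sup_eq (inf_le_left : N ⊓ X ≤ N)
  have hSX : IsCompl S X := isCompl_of_inf_sup_eq hSN hinf hsup hNX
  exact ⟨S, .of_isCompl hSX, hSN, hSX.sup_eq_top, hSX.inf_eq_bot⟩

end Module

theorem stmt19_general {R : Type u} [Ring R] (I : Ideal R)
    (hsoc : (I : Submodule R R) ≤ SocM R R) :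
    PSDRing R I := by
  intro F _ _ _ _ N hN
  have : IsSemisimpleModule R N := isSemisimpleModule_of_le_socM (hN.trans (smul_top_le_socM hsoc))
  exact psdIn_top_of_isSemisimpleModule N

theorem stmt19 {R : Type u} [Ring R] (I : Ideal R) (hI : IsTwoSidedI R I)
    (hsoc : (I : Submodule R R) ≤ SocM R R) :
    PSDRing R I :=
  stmt19_general I hsoc
end
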